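/- arXiv:1611.05629 — 3 statements merged into one kernel-verified Lean document; each statement's English description precedes it below -/
import Mathlib

section
/- Let A : ℂ^N → ℂ^N be a linear map with distinct eigenvalues λ₁,…,λ_s ∈ ℚ[i] whose generalized eigenspaces are E₁,…,E_s. Suppose λ₁ is real and d₁,…,d_n ∈ ℚ[i] are all distinct from λ₁. Then there exists a polynomial p(t) ∈ ℚ[t] such that p(λ₁) = 1, p(d_j) = 0 for all j, and p(A) : ℂ^N → ℂ^N is the projection onto E₁ along E₂ ⊕ ⋯ ⊕ E_s. -/
open Polynomial

lemma key_aux {V : Type*} [AddCommGroup V] [Module ℂ V] [FiniteDimensional ℂ V]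
    (A : Module.End ℂ V) (z : ℂ) (q : ℂ[X]) (m : ℕ) (hm : Module.finrank ℂ V ≤ m)
    (h : (X - C z) ^ m ∣ q) (x : V) (hx : x ∈ A.maxGenEigenspace z) :
    Polynomial.aeval A q x = 0 := by
  rw [Module.End.maxGenEigenspace_eq_genEigenspace_finrank,
    Module.End.mem_genEigenspace_nat, LinearMap.mem_ker] at hx
  obtain ⟨r, hr⟩ := h
  have hz : Polynomial.aeval A (X - C z) = A - z • 1 := by
    simp [Module.algebraMap_end_eq_smul_id, Module.End.one_eq_id]
  have hpow : ((A - z • 1) ^ m) x = 0 := by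
    obtain ⟨k, rfl⟩ := Nat.exists_eq_add_of_le hm
    rw [add_comm, pow_add, Module.End.mul_apply, hx, map_zero]
  rw [hr, mul_comm, map_mul, map_pow, hz, Module.End.mul_apply, hpow, map_zero]

/-- If `A` is a linear endomorphism of `ℂ^N` whose distinct eigenvalues `μ 0, …, μ s` all lie
in the Gaussian rationals, with generalized eigenspaces spanning `ℂ^N`, `μ 0` real, and
`d 1, …, d n` Gaussian rationals distinct from `μ 0`, then there is a rational polynomial `p`
with `p(μ 0) = 1`, `p(d j) = 0` for all `j`, and `p(A)` the projection onto the generalized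
eigenspace of `μ 0` along the others. -/
theorem stmt0 (N s n : ℕ) (A : Module.End ℂ (Fin N → ℂ))
    (μ : Fin (s + 1) → ℂ) (hμinj : Function.Injective μ)
    (hGauss : ∀ j, ∃ a b : ℚ, μ j = (a : ℂ) + (b : ℂ) * Complex.I)
    (heig : ∀ j, Module.End.HasEigenvalue A (μ j))
    (hspan : ⨆ j, Module.End.maxGenEigenspace A (μ j) = ⊤)
    (hreal : (μ 0).im = 0)
    (d : Fin n → ℂ)
    (hdGauss : ∀ j, ∃ a b : ℚ, d j = (a : ℂ) + (b : ℂ) * Complex.I)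
    (hdne : ∀ j, d j ≠ μ 0) :
    ∃ p : Polynomial ℚ,
      (p.map (algebraMap ℚ ℂ)).eval (μ 0) = 1 ∧
      (∀ j, (p.map (algebraMap ℚ ℂ)).eval (d j) = 0) ∧
      (∀ x ∈ Module.End.maxGenEigenspace A (μ 0),
        Polynomial.aeval A (p.map (algebraMap ℚ ℂ)) x = x) ∧
      (∀ j, j ≠ 0 → ∀ x ∈ Module.End.maxGenEigenspace A (μ j),
        Polynomial.aeval A (p.map (algebraMap ℚ ℂ)) x = 0) := by
  classical
  set φ : ℚ →+* ℂ := algebraMap ℚ ℂ with hφ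
  choose aa bb hab using hGauss
  choose da db hdab using hdGauss
  -- μ 0 is rational
  have hb0 : bb 0 = 0 := by
    have h := hreal
    rw [hab 0] at h
    simp [Complex.add_im, Complex.mul_im] at h
    exact_mod_cast h
  have hμ0 : μ 0 = φ (aa 0) := by
    rw [hab 0, hb0]
    simp [hφ]
  -- the quadratic building block
  set g : ℚ → ℚ → ℚ[X] := fun a b => (X - C a) ^ 2 + C (b ^ 2) with hg
  -- mapped g has root a + b I
  have hgroot : ∀ a b : ℚ, ((g a b).map φ).eval ((a : ℂ) + (b : ℂ) * Complex.I) = 0 := by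
    intro a b
    simp only [hg, Polynomial.map_add, Polynomial.map_pow, Polynomial.map_sub,
      Polynomial.map_X, Polynomial.map_C, eval_add, eval_pow, eval_sub, eval_X, eval_C]
    have h2 : (↑a + ↑b * Complex.I - φ a) = (b : ℂ) * Complex.I := by
      simp [hφ]
    rw [h2]
    have h3 : ((b : ℂ) * Complex.I) ^ 2 = -((b : ℂ) ^ 2) := by
      rw [mul_pow, Complex.I_sq]; ring
    rw [h3]
    simp [hφ]
  -- g evaluated at a rational r is nonzero unless r = a ∧ b = 0
  have hgne : ∀ a b r : ℚ, ¬(r = a ∧ b = 0) → (g a b).eval r ≠ 0 := by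
    intro a b r hr
    simp only [hg, eval_add, eval_pow, eval_sub, eval_X, eval_C]
    intro h
    have h1 : (r - a) ^ 2 = 0 ∧ b ^ 2 = 0 := by
      constructor <;> nlinarith [sq_nonneg (r - a), sq_nonneg b]
    exact hr ⟨by nlinarith [h1.1], by nlinarith [h1.2]⟩
  set G : ℚ[X] :=
    (∏ j : Fin s, g (aa j.succ) (bb j.succ)) * ∏ j : Fin n, g (da j) (db j) with hG
  set c : ℚ := G.eval (aa 0) with hc
  have hcne : c ≠ 0 := by
    rw [hc, hG, eval_mul, eval_prod, eval_prod]
    apply mul_ne_zero <;> apply Finset.prod_ne_zero_iff.mpr <;> intro j _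
    · apply hgne
      rintro ⟨h1, h2⟩
      have : μ j.succ = μ 0 := by
        rw [hab j.succ, ← h1, h2, hμ0]; simp [hφ]
      exact (Fin.succ_ne_zero j) (hμinj this)
    · apply hgne
      rintro ⟨h1, h2⟩
      apply hdne j
      rw [hdab j, ← h1, h2, hμ0]; simp [hφ]
  set m : ℕ := N + 1 with hm
  set p0 : ℚ[X] := (C c⁻¹ * G) ^ m with hp0
  set p : ℚ[X] := 1 - (1 - p0) ^ m with hp
  have hp0eval : p0.eval (aa 0) = 1 := by
    rw [hp0, eval_pow, eval_mul, eval_C, ← hc, inv_mul_cancel₀ hcne, one_pow]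
  have hpeval : p.eval (aa 0) = 1 := by
    rw [hp, eval_sub, eval_one, eval_pow, eval_sub, eval_one, hp0eval]
    simp
  -- divisibility: p0 ∣ p
  have hp0dvdp : p0 ∣ p := by
    have hF : (X : ℚ[X]) ∣ ((1 : ℚ[X]) - (1 - X) ^ m) := by
      have h := (dvd_iff_isRoot (p := (1 : ℚ[X]) - (1 - X) ^ m) (a := (0 : ℚ))).mpr
        (by simp [IsRoot])
      simpa using h
    obtain ⟨u, hu⟩ := hF
    have : p = ((1 : ℚ[X]) - (1 - X) ^ m).comp p0 := by
      simp [hp, sub_comp, one_comp, pow_comp, X_comp]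
    rw [this, hu, mul_comp, X_comp]
    exact Dvd.intro _ rfl
  -- divisibility: (X - C (aa 0)) ^ m ∣ 1 - p
  have h1p : (X - C (aa 0)) ^ m ∣ (1 - p) := by
    have : (1 - p) = (1 - p0) ^ m := by rw [hp]; ring
    rw [this]
    apply pow_dvd_pow_of_dvd
    apply (dvd_iff_isRoot).mpr
    simp [IsRoot, hp0eval]
  refine ⟨p, ?_, ?_, ?_, ?_⟩
  · rw [hμ0, eval_map, eval₂_hom, hpeval, map_one]
  · intro j
    have hGd : (G.map φ).eval (d j) = 0 := by
      simp only [hG, Polynomial.map_mul, Polynomial.map_prod, eval_mul, eval_prod]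
      apply mul_eq_zero_of_right
      apply Finset.prod_eq_zero (Finset.mem_univ j)
      rw [hdab j]
      exact hgroot (da j) (db j)
    have hp0d : (p0.map φ).eval (d j) = 0 := by
      rw [hp0, Polynomial.map_pow, Polynomial.map_mul, eval_pow, eval_mul, hGd,
        mul_zero, zero_pow (by simp [hm])]
    rw [hp, Polynomial.map_sub, Polynomial.map_one, Polynomial.map_pow,
      Polynomial.map_sub, Polynomial.map_one, eval_sub, eval_one, eval_pow,
      eval_sub, eval_one, hp0d]
    simp
  · intro x hx
    have hdvd : (X - C (μ 0)) ^ m ∣ (1 - p.map φ) := by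
      have := Polynomial.map_dvd φ h1p
      rwa [Polynomial.map_pow, Polynomial.map_sub, Polynomial.map_X, Polynomial.map_C,
        Polynomial.map_sub, Polynomial.map_one, ← hμ0] at this
    have hkey := key_aux A (μ 0) (1 - p.map φ) m
      (by simp [hm, Module.finrank_pi]) hdvd x hx
    rw [map_sub, map_one, LinearMap.sub_apply, Module.End.one_apply, sub_eq_zero] at hkey
    exact hkey.symm
  · intro j hj x hx
    obtain ⟨i, rfl⟩ := Fin.exists_succ_eq.mpr hj
    have hroot : (X - C (μ i.succ)) ∣ G.map φ := by
      apply (dvd_iff_isRoot).mpr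
      simp only [hG, Polynomial.map_mul, Polynomial.map_prod, IsRoot, eval_mul, eval_prod]
      apply mul_eq_zero_of_left
      apply Finset.prod_eq_zero (Finset.mem_univ i)
      rw [hab i.succ]
      exact hgroot _ _
    have hdvd : (X - C (μ i.succ)) ^ m ∣ p.map φ := by
      refine dvd_trans ?_ (Polynomial.map_dvd φ hp0dvdp)
      rw [hp0, Polynomial.map_pow, Polynomial.map_mul, Polynomial.map_C]
      exact pow_dvd_pow_of_dvd (hroot.trans (dvd_mul_left _ _)) m
    exact key_aux A (μ i.succ) (p.map φ) m (by simp [hm, Module.finrank_pi]) hdvd x hx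
end

section
/- Let x and y be unit quaternions satisfying x y x⁻¹ y⁻¹ = −1. Then x and y are purely imaginary (equivalently, of trace zero when viewed in SU(2)), and, viewed as unit vectors in the 3-dimensional space of purely imaginary quaternions, x and y are orthogonal. -/
open scoped Quaternion

/-- If `x` and `y` are unit quaternions with `x y x⁻¹ y⁻¹ = -1`, then `x` and `y` are purely
imaginary, and are orthogonal with respect to the real inner product on the quaternions. -/
theorem stmt1 (x y : ℍ[ℝ]) (hx : ‖x‖ = 1) (hy : ‖y‖ = 1)
    (h : x * y * x⁻¹ * y⁻¹ = -1) :
    x.re = 0 ∧ y.re = 0 ∧ (inner ℝ x y : ℝ) = 0 := by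
  have hx0 : x ≠ 0 := by intro h0; rw [h0, norm_zero] at hx; norm_num at hx
  have hy0 : y ≠ 0 := by intro h0; rw [h0, norm_zero] at hy; norm_num at hy
  have h1 : x * y * x⁻¹ = -y := by
    have := congrArg (· * y) h
    simpa [mul_assoc, inv_mul_cancel₀ hy0] using this
  have h' : x * y = -(y * x) := by
    have := congrArg (· * x) h1
    simpa [mul_assoc, inv_mul_cancel₀ hx0] using this
  have hnx : x.re^2 + x.imI^2 + x.imJ^2 + x.imK^2 = 1 := by
    rw [← Quaternion.normSq_def', Quaternion.normSq_eq_norm_mul_self, hx]; norm_num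
  have hny : y.re^2 + y.imI^2 + y.imJ^2 + y.imK^2 = 1 := by
    rw [← Quaternion.normSq_def', Quaternion.normSq_eq_norm_mul_self, hy]; norm_num
  rw [Quaternion.ext_iff] at h'
  obtain ⟨e1, e2, e3, e4⟩ := h'
  simp only [Quaternion.re_mul, Quaternion.imI_mul, Quaternion.imJ_mul, Quaternion.imK_mul,
    Quaternion.re_neg, Quaternion.imI_neg, Quaternion.imJ_neg, Quaternion.imK_neg] at e1 e2 e3 e4
  have he : y.re = 0 := by
    linear_combination (x.re/2)*e1 + (x.imI/2)*e2 + (x.imJ/2)*e3 + (x.imK/2)*e4 - y.re*hnx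
  have ha : x.re = 0 := by
    linear_combination (y.imI/2)*e2 + (y.imJ/2)*e3 + (y.imK/2)*e4 - x.re*hny +
      (x.re*y.re - x.imI*y.imI - x.imJ*y.imJ - x.imK*y.imK)*he
  refine ⟨ha, he, ?_⟩
  rw [Quaternion.inner_def]
  simp only [Quaternion.re_mul, Quaternion.re_star, Quaternion.imI_star, Quaternion.imJ_star,
    Quaternion.imK_star]
  linear_combination (-1/2)*e1 + 2*y.re*ha
end

section
/- Let x and y be unit quaternions with x y x⁻¹ y⁻¹ = −1. Then there exists a unit quaternion g such that g x g⁻¹ = i and g y g⁻¹ = j; moreover g is unique up to sign, i.e., if g' also satisfies these equations then g' = ±g. -/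
open scoped Quaternion
open Quaternion

lemma qre_mul_comm (a b : ℍ[ℝ]) : (a*b).re = (b*a).re := by
  simp only [Quaternion.re_mul]; ring

lemma qnorm_one_iff (a : ℍ[ℝ]) :
    ‖a‖ = 1 ↔ a.re^2 + a.imI^2 + a.imJ^2 + a.imK^2 = 1 := by
  rw [← Quaternion.normSq_def', Quaternion.normSq_eq_norm_mul_self]
  constructor
  · intro h; rw [h]; ring
  · intro h; nlinarith [norm_nonneg a]

lemma qpure_mul_self {u : ℍ[ℝ]} (h0 : u.re = 0) (h1 : ‖u‖ = 1) : u * u = -1 := by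
  have hn := (qnorm_one_iff u).1 h1
  ext <;> simp [Quaternion.re_mul, Quaternion.imI_mul, Quaternion.imJ_mul, Quaternion.imK_mul, h0] <;> nlinarith [hn]

lemma qrot_step {u p : ℍ[ℝ]} (hu : u.re = 0) (hnu : ‖u‖ = 1) (hp : p.re = 0) (hnp : ‖p‖ = 1) :
    (1 - p*u) * u = p * (1 - p*u) := by
  have h1 : u*u = -1 := qpure_mul_self hu hnu
  have h2 : p*p = -1 := qpure_mul_self hp hnp
  rw [sub_mul, one_mul, mul_assoc, h1, mul_sub, mul_one, ← mul_assoc, h2]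
  simp [sub_neg_eq_add, add_comm]

lemma qrot_ne {u p : ℍ[ℝ]} (hp : p.re = 0) (hnp : ‖p‖ = 1) (hne : u ≠ -p) :
    (1 - p*u) ≠ 0 := by
  intro h
  have h2 : p*p = -1 := qpure_mul_self hp hnp
  have h3 : p * u = 1 := (sub_eq_zero.mp h).symm
  apply hne
  have h4 := congrArg (p * ·) h3
  simp only [mul_one, ← mul_assoc, h2, neg_one_mul] at h4
  rw [← h4, neg_neg]

set_option maxHeartbeats 1000000 in
/-- If `x, y` are unit quaternions with `x y x⁻¹ y⁻¹ = -1`, then there is a unit quaternion `g`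
with `g x g⁻¹ = i` and `g y g⁻¹ = j`, and `g` is unique up to sign. -/
theorem stmt2 (x y : ℍ[ℝ]) (hx : ‖x‖ = 1) (hy : ‖y‖ = 1)
    (h : x * y * x⁻¹ * y⁻¹ = -1) :
    ∃ g : ℍ[ℝ], ‖g‖ = 1 ∧
      g * x * g⁻¹ = (⟨0, 1, 0, 0⟩ : ℍ[ℝ]) ∧ g * y * g⁻¹ = (⟨0, 0, 1, 0⟩ : ℍ[ℝ]) ∧
      ∀ g' : ℍ[ℝ], ‖g'‖ = 1 → g' * x * g'⁻¹ = (⟨0, 1, 0, 0⟩ : ℍ[ℝ]) →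
        g' * y * g'⁻¹ = (⟨0, 0, 1, 0⟩ : ℍ[ℝ]) → g' = g ∨ g' = -g := by
  have hx0 : x ≠ 0 := fun h0 => by simp [h0] at hx
  have hy0 : y ≠ 0 := fun h0 => by simp [h0] at hy
  set iq : ℍ[ℝ] := ⟨0, 1, 0, 0⟩ with hiqdef
  set jq : ℍ[ℝ] := ⟨0, 0, 1, 0⟩ with hjqdef
  have hiqre : iq.re = 0 := rfl
  have hjqre : jq.re = 0 := rfl
  have hiqn : ‖iq‖ = 1 := (qnorm_one_iff _).2 (by show (0:ℝ)^2+1^2+0^2+0^2 = 1; norm_num)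
  have hjqn : ‖jq‖ = 1 := (qnorm_one_iff _).2 (by show (0:ℝ)^2+0^2+1^2+0^2 = 1; norm_num)
  -- anticommutation
  have h1 : x * (y * x⁻¹) = -y := by
    have := congrArg (· * y) h
    simpa [mul_assoc, inv_mul_cancel₀ hy0] using this
  have hanti : x * y = -(y * x) := by
    have := congrArg (· * x) h1
    simpa [mul_assoc, inv_mul_cancel₀ hx0] using this
  have key : x * y + y * x = 0 := by rw [hanti]; simp
  have e0 := congrArg QuaternionAlgebra.re key
  have e1 := congrArg QuaternionAlgebra.imI key
  have e2 := congrArg QuaternionAlgebra.imJ key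
  have e3 := congrArg QuaternionAlgebra.imK key
  simp only [Quaternion.re_add, Quaternion.imI_add, Quaternion.imJ_add, Quaternion.imK_add,
    Quaternion.re_mul, Quaternion.imI_mul, Quaternion.imJ_mul, Quaternion.imK_mul,
    Quaternion.re_zero, Quaternion.imI_zero, Quaternion.imJ_zero, Quaternion.imK_zero] at e0 e1 e2 e3
  have nx := (qnorm_one_iff x).1 hx
  have ny := (qnorm_one_iff y).1 hy
  have hyre : y.re = 0 := by
    linear_combination (-y.re) * nx + (x.imI/2) * e1 + (x.imJ/2) * e2 + (x.imK/2) * e3 + (x.re/2) * e0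
  have hxre : x.re = 0 := by
    linear_combination (-x.re) * ny + (y.imI/2) * e1 + (y.imJ/2) * e2 + (y.imK/2) * e3 + (y.re/2) * e0
  have orth : x.imI*y.imI + x.imJ*y.imJ + x.imK*y.imK = 0 := by
    linear_combination (-(1:ℝ)/2) * e0 + y.re * hxre
  -- step 1: g₀ with g₀ x = iq g₀
  obtain ⟨g₀, hg0ne, hg0x⟩ : ∃ g₀ : ℍ[ℝ], g₀ ≠ 0 ∧ g₀ * x = iq * g₀ := by
    by_cases hc : x = -iq
    · refine ⟨jq, ?_, ?_⟩
      · intro h0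
        have := congrArg QuaternionAlgebra.imJ h0
        simp [hjqdef] at this
      · rw [hc]
        ext <;> simp [Quaternion.re_mul, Quaternion.imI_mul, Quaternion.imJ_mul,
          Quaternion.imK_mul] <;> simp [hiqdef, hjqdef]
    · exact ⟨1 - iq * x, qrot_ne hiqre hiqn hc, qrot_step hxre hx hiqre hiqn⟩
  -- the conjugate u = g₀ y g₀⁻¹
  set u : ℍ[ℝ] := g₀ * y * g₀⁻¹ with hudef
  have hug : u * g₀ = g₀ * y := by
    rw [hudef, mul_assoc, inv_mul_cancel₀ hg0ne, mul_one]
  have hure : u.re = 0 := by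
    have : u.re = (g₀⁻¹ * (g₀ * y)).re := by
      rw [hudef, qre_mul_comm]
    rw [this, ← mul_assoc, inv_mul_cancel₀ hg0ne, one_mul, hyre]
  have hun : ‖u‖ = 1 := by
    rw [hudef, norm_mul, norm_mul, norm_inv, hy]
    field_simp [norm_ne_zero_iff.mpr hg0ne]
  have huiq : u.imI = 0 := by
    have hiq2 : iq = g₀ * x * g₀⁻¹ := by
      rw [hg0x, mul_assoc, mul_inv_cancel₀ hg0ne, mul_one]
    have h5 : u * iq = g₀ * (y * x) * g₀⁻¹ := by
      rw [hiq2, hudef]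
      have hmid : g₀⁻¹ * (g₀ * x * g₀⁻¹) = x * g₀⁻¹ := by
        rw [← mul_assoc, ← mul_assoc, inv_mul_cancel₀ hg0ne, one_mul]
      rw [mul_assoc (g₀ * y), hmid]
      simp [mul_assoc]
    have h6 : (u * iq).re = (y * x).re := by
      rw [h5, qre_mul_comm, ← mul_assoc, inv_mul_cancel₀ hg0ne, one_mul]
    have h7 : (u * iq).re = -u.imI := by
      simp [Quaternion.re_mul]; simp [hiqdef]
    have h8 : (y * x).re = 0 := by
      simp only [Quaternion.re_mul, hxre, hyre]
      linarith [orth]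
    rw [h7, h8] at h6
    linarith
  -- step 2: g₁ with g₁ u = jq g₁ and g₁ iq = iq g₁
  obtain ⟨g₁, hg1ne, hg1u, hg1i⟩ :
      ∃ g₁ : ℍ[ℝ], g₁ ≠ 0 ∧ g₁ * u = jq * g₁ ∧ g₁ * iq = iq * g₁ := by
    by_cases hc : u = -jq
    · refine ⟨iq, ?_, ?_, rfl⟩
      · intro h0
        have := congrArg QuaternionAlgebra.imI h0
        simp [hiqdef] at this
      · rw [hc]
        ext <;> simp [Quaternion.re_mul, Quaternion.imI_mul, Quaternion.imJ_mul,
          Quaternion.imK_mul] <;> simp [hiqdef, hjqdef]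
    · refine ⟨1 - jq * u, qrot_ne hjqre hjqn hc, qrot_step hure hun hjqre hjqn, ?_⟩
      ext <;> simp [Quaternion.re_mul, Quaternion.imI_mul, Quaternion.imJ_mul,
        Quaternion.imK_mul, Quaternion.re_sub, Quaternion.imI_sub, Quaternion.imJ_sub,
        Quaternion.imK_sub, hure, huiq] <;> simp [hiqdef, hjqdef, hure, huiq]
  set g₂ : ℍ[ℝ] := g₁ * g₀ with hg2def
  have hg2ne : g₂ ≠ 0 := mul_ne_zero hg1ne hg0ne
  have hg2x : g₂ * x = iq * g₂ := by
    rw [hg2def, mul_assoc, hg0x, ← mul_assoc, hg1i, mul_assoc]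
  have hg2y : g₂ * y = jq * g₂ := by
    rw [hg2def, mul_assoc, ← hug, ← mul_assoc, hg1u, mul_assoc]
  -- normalize
  set g : ℍ[ℝ] := (‖g₂‖⁻¹ : ℝ) * g₂ with hgdef
  have hn2 : ‖g₂‖ ≠ 0 := norm_ne_zero_iff.mpr hg2ne
  have hgn : ‖g‖ = 1 := by
    rw [hgdef, norm_mul, Quaternion.norm_coe]
    simp [abs_of_nonneg (inv_nonneg.mpr (norm_nonneg g₂)), inv_mul_cancel₀ hn2]
  have hgne : g ≠ 0 := by
    intro h0; rw [h0] at hgn; simp at hgn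
  have hgx' : g * x = iq * g := by
    rw [hgdef, mul_assoc, hg2x, ← mul_assoc, Quaternion.coe_commutes, mul_assoc]
  have hgy' : g * y = jq * g := by
    rw [hgdef, mul_assoc, hg2y, ← mul_assoc, Quaternion.coe_commutes, mul_assoc]
  have hgx : g * x * g⁻¹ = iq := by
    rw [hgx', mul_assoc, mul_inv_cancel₀ hgne, mul_one]
  have hgy : g * y * g⁻¹ = jq := by
    rw [hgy', mul_assoc, mul_inv_cancel₀ hgne, mul_one]
  refine ⟨g, hgn, hgx, hgy, ?_⟩
  -- uniqueness
  intro g' hg'n hg'x hg'y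
  have hg'ne : g' ≠ 0 := fun h0 => by simp [h0] at hg'n
  have hg'x' : g' * x = iq * g' := by
    have h9 := congrArg (· * g') hg'x
    simpa [mul_assoc, inv_mul_cancel₀ hg'ne] using h9
  have hg'y' : g' * y = jq * g' := by
    have h9 := congrArg (· * g') hg'y
    simpa [mul_assoc, inv_mul_cancel₀ hg'ne] using h9
  have hxg : g⁻¹ * iq = x * g⁻¹ := by
    rw [← hgx, ← mul_assoc, ← mul_assoc, inv_mul_cancel₀ hgne, one_mul]
  have hyg : g⁻¹ * jq = y * g⁻¹ := by
    rw [← hgy, ← mul_assoc, ← mul_assoc, inv_mul_cancel₀ hgne, one_mul]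
  have hHi : (g' * g⁻¹) * iq = iq * (g' * g⁻¹) := by
    rw [mul_assoc, hxg, ← mul_assoc, hg'x', mul_assoc]
  have hHj : (g' * g⁻¹) * jq = jq * (g' * g⁻¹) := by
    rw [mul_assoc, hyg, ← mul_assoc, hg'y', mul_assoc]
  have hHn : ‖g' * g⁻¹‖ = 1 := by
    rw [norm_mul, norm_inv, hg'n, hgn]; norm_num
  set H : ℍ[ℝ] := g' * g⁻¹ with hHdef
  have ci1 := congrArg QuaternionAlgebra.imJ hHi
  have ci2 := congrArg QuaternionAlgebra.imK hHi
  have cj1 := congrArg QuaternionAlgebra.imI hHj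
  have cj2 := congrArg QuaternionAlgebra.imK hHj
  simp only [Quaternion.imI_mul, Quaternion.imJ_mul, Quaternion.imK_mul] at ci1 ci2 cj1 cj2; simp only [hiqdef, hjqdef] at ci1 ci2 cj1 cj2
  have hHimI : H.imI = 0 := by norm_num at cj1; linarith
  have hHimJ : H.imJ = 0 := by norm_num at ci2; linarith
  have hHimK : H.imK = 0 := by norm_num at ci1; linarith
  have hHsq := (qnorm_one_iff H).1 hHn
  rw [hHimI, hHimJ, hHimK] at hHsq
  have hHre : H.re = 1 ∨ H.re = -1 := by
    apply mul_self_eq_one_iff.mp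
    nlinarith [hHsq]
  have hg'H : g' = H * g := by
    rw [hHdef, mul_assoc, inv_mul_cancel₀ hgne, mul_one]
  rcases hHre with h' | h'
  · left
    have hH1 : H = 1 := by
      ext <;> simp [h', hHimI, hHimJ, hHimK]
    rw [hg'H, hH1, one_mul]
  · right
    have hH1 : H = -1 := by
      ext <;> simp [h', hHimI, hHimJ, hHimK]
    rw [hg'H, hH1]
    simp
end
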